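/- arXiv:2601.10830 — 11 statements merged into one kernel-verified Lean document; each statement's English description precedes it below -/
import Mathlib

section
/- Let H be a finite abelian group of order n ≥ 2, written additively, and let m > 1 be an integer. The m-graph of H is connected if and only if every prime factor of n is a prime factor of m. -/
def mGraph (m : ℕ) (H : Type*) [AddCommGroup H] : SimpleGraph H where
  Adj a b := a ≠ b ∧ (m • a = b ∨ m • b = a)
  symm := ⟨fun _ _ h => ⟨h.1.symm, h.2.symm⟩⟩
  loopless := ⟨fun _ h => h.1 rfl⟩

instance (m : ℕ) (H : Type*) [AddCommGroup H] [DecidableEq H] :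
    DecidableRel (mGraph m H).Adj :=
  fun a b => inferInstanceAs (Decidable (a ≠ b ∧ (m • a = b ∨ m • b = a)))

/-!
The connected component of `0` in the m-graph is exactly the set of elements killed by some
power of `m`: the walk `a, m a, m² a, …` joins every such `a` to `0`, and being killed by a
power of `m` is preserved along both kinds of edges `a — m a`. So the graph is connected iff
every element has order dividing a power of `m`. In a finite group this holds iff every prime
factor of `|H|` divides `m`: Cauchy's theorem gives elements of each prime order `p ∣ |H|`,
and conversely `|H|` then divides `m ^ |H|`.
-/

theorem Nat.dvd_pow_self_of_forall_prime_dvd {n m : ℕ} (hn : n ≠ 0)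
    (h : ∀ p : ℕ, p.Prime → p ∣ n → p ∣ m) : n ∣ m ^ n := by
  refine (Nat.dvd_prod_primeFactors_pow_self hn).trans (pow_dvd_pow_of_dvd ?_ n)
  refine Finset.prod_primes_dvd m (fun p hp => (Nat.prime_of_mem_primeFactors hp).prime) ?_
  exact fun p hp => h p (Nat.prime_of_mem_primeFactors hp) (Nat.dvd_of_mem_primeFactors hp)

theorem forall_exists_pow_nsmul_eq_zero_iff {H : Type*} [AddCommGroup H] [Fintype H] (m : ℕ) :
    (∀ a : H, ∃ k, m ^ k • a = 0) ↔ ∀ p : ℕ, p.Prime → p ∣ Fintype.card H → p ∣ m := by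
  constructor
  · intro h p hp hpH
    have := Fact.mk hp
    obtain ⟨a, ha⟩ := exists_prime_addOrderOf_dvd_card p hpH
    obtain ⟨k, hk⟩ := h a
    exact hp.dvd_of_dvd_pow (ha ▸ addOrderOf_dvd_of_nsmul_eq_zero hk)
  · intro h a
    have hcard : Fintype.card H ∣ m ^ Fintype.card H :=
      Nat.dvd_pow_self_of_forall_prime_dvd Fintype.card_ne_zero h
    exact ⟨_, addOrderOf_dvd_iff_nsmul_eq_zero.mp (addOrderOf_dvd_card.trans hcard)⟩

namespace mGraph

variable {m : ℕ} {H : Type*} [AddCommGroup H]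

theorem reachable_nsmul (a : H) : (mGraph m H).Reachable a (m • a) := by
  by_cases h : a = m • a
  · exact h ▸ .refl a
  · exact SimpleGraph.Adj.reachable ⟨h, .inl rfl⟩

theorem reachable_pow_nsmul (a : H) (k : ℕ) : (mGraph m H).Reachable a (m ^ k • a) := by
  induction k with
  | zero => simp
  | succ k ih =>
    rw [pow_succ', mul_smul]
    exact ih.trans (reachable_nsmul _)

theorem exists_pow_nsmul_eq_zero_of_adj {a b : H} (hab : (mGraph m H).Adj a b)
    (ha : ∃ k, m ^ k • a = 0) : ∃ k, m ^ k • b = 0 := by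
  obtain ⟨k, hk⟩ := ha
  rcases hab.2 with rfl | rfl
  · exact ⟨k, by rw [smul_comm, hk, smul_zero]⟩
  · exact ⟨k + 1, by rw [pow_succ, mul_smul, hk]⟩

theorem exists_pow_nsmul_eq_zero_of_reachable {a b : H} (hab : (mGraph m H).Reachable a b)
    (ha : ∃ k, m ^ k • a = 0) : ∃ k, m ^ k • b = 0 := by
  obtain ⟨w⟩ := hab
  induction w with
  | nil => exact ha
  | cons hab _ ih => exact ih (exists_pow_nsmul_eq_zero_of_adj hab ha)

theorem reachable_zero_iff (a : H) :
    (mGraph m H).Reachable 0 a ↔ ∃ k, m ^ k • a = 0 :=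
  ⟨fun h => exists_pow_nsmul_eq_zero_of_reachable h ⟨0, smul_zero _⟩,
    fun ⟨k, hk⟩ => hk ▸ (reachable_pow_nsmul a k).symm⟩

theorem connected_iff : (mGraph m H).Connected ↔ ∀ a : H, ∃ k, m ^ k • a = 0 := by
  simp only [← reachable_zero_iff]
  exact ⟨fun hc a => hc.preconnected 0 a,
    fun h => (SimpleGraph.connected_iff_exists_forall_reachable _).mpr ⟨0, h⟩⟩

end mGraph

theorem stmt_3_general (H : Type*) [AddCommGroup H] [Fintype H]
    (m : ℕ) :
    (mGraph m H).Connected ↔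
      ∀ p : ℕ, p.Prime → p ∣ Fintype.card H → p ∣ m :=
  mGraph.connected_iff.trans (forall_exists_pow_nsmul_eq_zero_iff m)

theorem stmt_3 (H : Type*) [AddCommGroup H] [Fintype H]
    (hn : 2 ≤ Fintype.card H) (m : ℕ) (hm : 1 < m) :
    (mGraph m H).Connected ↔
      ∀ p : ℕ, p.Prime → p ∣ Fintype.card H → p ∣ m :=
  stmt_3_general H m
end

section
/- Let H be a finite abelian group of order n, where n > 1 is squarefree, and let m > 1 be an integer. Then the m-graph of H is connected if and only if n divides m. -/
theorem Nat.dvd_of_squarefree_of_forall_prime_dvd {n m : ℕ} (hn : Squarefree n)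
    (h : ∀ p, p.Prime → p ∣ n → p ∣ m) : n ∣ m := by
  rw [← Nat.prod_primeFactors_of_squarefree hn]
  exact Finset.prod_primes_dvd m (fun p hp => (Nat.prime_of_mem_primeFactors hp).prime)
    fun p hp => h p (Nat.prime_of_mem_primeFactors hp) (Nat.dvd_of_mem_primeFactors hp)

namespace mGraph

variable {m : ℕ} {H : Type*} [AddCommGroup H]

theorem exists_pow_smul_eq_of_reachable {x y : H} (h : (mGraph m H).Reachable x y) :
    ∃ k l : ℕ, m ^ k • x = m ^ l • y := by
  obtain ⟨w⟩ := h
  induction w with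
  | nil => exact ⟨0, 0, rfl⟩
  | cons hadj _ ih =>
    obtain ⟨k, l, hkl⟩ := ih
    rcases hadj.2 with hxy | hyx
    · exact ⟨k + 1, l, by rw [pow_succ, mul_smul, hxy, hkl]⟩
    · exact ⟨k, l + 1, by rw [← hyx, ← mul_smul, ← pow_succ, pow_succ', mul_smul, hkl,
        ← mul_smul, ← pow_succ']⟩

theorem exists_addOrderOf_dvd_pow_of_reachable_zero {x : H} (h : (mGraph m H).Reachable x 0) :
    ∃ k : ℕ, addOrderOf x ∣ m ^ k := by
  obtain ⟨k, l, hkl⟩ := exists_pow_smul_eq_of_reachable h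
  exact ⟨k, addOrderOf_dvd_of_nsmul_eq_zero (hkl.trans (smul_zero _))⟩

theorem prime_dvd_of_connected [Fintype H] (hc : (mGraph m H).Connected) {p : ℕ}
    (hp : p.Prime) (hpH : p ∣ Fintype.card H) : p ∣ m := by
  have := Fact.mk hp
  obtain ⟨x, hx⟩ := exists_prime_addOrderOf_dvd_card p hpH
  obtain ⟨k, hk⟩ := exists_addOrderOf_dvd_pow_of_reachable_zero (hc.preconnected x 0)
  exact hp.dvd_of_dvd_pow (hx ▸ hk)

theorem connected_of_forall_nsmul_eq_zero (h : ∀ a : H, m • a = 0) : (mGraph m H).Connected := by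
  have hreach (a : H) : (mGraph m H).Reachable a 0 := by
    by_cases ha : a = 0
    · exact ha ▸ SimpleGraph.Reachable.refl _
    · exact SimpleGraph.Adj.reachable ⟨ha, Or.inl (h a)⟩
  exact (SimpleGraph.connected_iff _).mpr ⟨fun a b => (hreach a).trans (hreach b).symm, ⟨0⟩⟩

end mGraph

theorem stmt_4_general (H : Type*) [AddCommGroup H] [Fintype H]
    (hsf : Squarefree (Fintype.card H))
    (m : ℕ) :
    (mGraph m H).Connected ↔ Fintype.card H ∣ m := by
  constructor
  · intro hc
    exact Nat.dvd_of_squarefree_of_forall_prime_dvd hsf fun p hp hpH =>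
      mGraph.prime_dvd_of_connected hc hp hpH
  · rintro ⟨c, rfl⟩
    exact mGraph.connected_of_forall_nsmul_eq_zero fun a => by
      rw [mul_comm, mul_smul, card_nsmul_eq_zero, smul_zero]

theorem stmt_4 (H : Type*) [AddCommGroup H] [Fintype H]
    (hn : 1 < Fintype.card H) (hsf : Squarefree (Fintype.card H))
    (m : ℕ) (hm : 1 < m) :
    (mGraph m H).Connected ↔ Fintype.card H ∣ m :=
  stmt_4_general H hsf m
end

section
/- Let n > 1, m > 1 be integers such that every prime factor of n divides m, and let k = gcd(m, n). If a ∈ ℤ/nℤ is nonzero and k does not divide a (as an integer with 0 ≤ a < n), then in the m-graph of ℤ/nℤ the degree of a equals 1. -/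
/-!
If `k = gcd(m, n)` does not divide `a`, then `a` is not a multiple `m • b` in `ℤ/nℤ`, since
`k` divides every such multiple. So the only neighbour of `a` in the `m`-graph is `m • a`,
which differs from `a` for the same reason.
-/

theorem ZMod.gcd_dvd_val_nsmul {n : ℕ} (m : ℕ) (b : ZMod n) :
    Nat.gcd m n ∣ (m • b).val := by
  rw [nsmul_eq_mul, ZMod.val_mul, ZMod.val_natCast, Nat.dvd_mod_iff (Nat.gcd_dvd_right m n)]
  exact Dvd.dvd.mul_right ((Nat.dvd_mod_iff (Nat.gcd_dvd_right m n)).2 (Nat.gcd_dvd_left m n)) _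

theorem mGraph_degree_eq_one_of_forall_nsmul_ne {m : ℕ} {H : Type*} [AddCommGroup H] {a : H}
    [Fintype ((mGraph m H).neighborSet a)] (h : ∀ b : H, m • b ≠ a) :
    (mGraph m H).degree a = 1 := by
  refine SimpleGraph.degree_eq_one_iff_existsUnique_adj.2
    ⟨m • a, ⟨fun he => h a he.symm, .inl rfl⟩, ?_⟩
  rintro b ⟨-, hb | hb⟩
  · exact hb.symm
  · exact absurd hb (h b)

theorem stmt_6_general (n m : ℕ) [NeZero n]
    (a : ZMod n) (hka : ¬ Nat.gcd m n ∣ a.val) :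
    (mGraph m (ZMod n)).degree a = 1 :=
  mGraph_degree_eq_one_of_forall_nsmul_ne fun b hb => hka (hb ▸ ZMod.gcd_dvd_val_nsmul m b)

theorem stmt_6 (n m : ℕ) [NeZero n] (hn : 1 < n) (hm : 1 < m)
    (hp : ∀ p : ℕ, p.Prime → p ∣ n → p ∣ m)
    (a : ZMod n) (ha : a ≠ 0) (hka : ¬ Nat.gcd m n ∣ a.val) :
    (mGraph m (ZMod n)).degree a = 1 :=
  stmt_6_general n m a hka
end

section
/- Let n > 1, m > 1 be integers such that every prime factor of n divides m, and let k = gcd(m, n). If a ∈ ℤ/nℤ is nonzero and k divides a (as an integer with 0 ≤ a < n), then in the m-graph of ℤ/nℤ the degree of a equals k + 1. -/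
/-!
The prime-factor condition says that `m` is nilpotent in `ZMod n`, so `m - 1` and `m * m - 1` are
units there. Hence for `a ≠ 0` neither `m • a = a` nor `m • m • a = a`, and the neighbours of `a`
are `m • a` together with the solutions of `m • b = a`, all distinct from each other. Since
`gcd m n ∣ a`, the element `a` lies in the image of `b ↦ m • b`, so these solutions form a coset
of its kernel, which in the cyclic group `ZMod n` has `gcd m n` elements.
-/

open Finset

@[simp]
theorem mGraph_adj {m : ℕ} {H : Type*} [AddCommGroup H] {a b : H} :
    (mGraph m H).Adj a b ↔ a ≠ b ∧ (m • a = b ∨ m • b = a) :=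
  Iff.rfl

theorem mGraph_degree_eq_card_nsmul_eq_add_one {H : Type*} [AddCommGroup H] [Fintype H]
    [DecidableEq H] {m : ℕ} {a : H} (hfix : m • a ≠ a) (hfix₂ : m • m • a ≠ a) :
    (mGraph m H).degree a = #{b | m • b = a} + 1 := by
  have hnbhd : (mGraph m H).neighborFinset a = insert (m • a) ({b | m • b = a} : Finset H) := by
    ext b
    simp only [SimpleGraph.mem_neighborFinset, mGraph_adj, Finset.mem_insert, Finset.mem_filter,
      Finset.mem_univ, true_and]
    constructor
    · rintro ⟨-, h | h⟩
      exacts [Or.inl h.symm, Or.inr h]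
    · rintro (rfl | h)
      · exact ⟨fun h => hfix h.symm, Or.inl rfl⟩
      · exact ⟨by rintro rfl; exact hfix h, Or.inr h⟩
  rw [← SimpleGraph.card_neighborFinset_eq_degree, hnbhd, Finset.card_insert_of_notMem]
  simpa using hfix₂

theorem mul_ne_self_of_isNilpotent {R : Type*} [Ring R] {r x : R} (hr : IsNilpotent r)
    (hx : x ≠ 0) : r * x ≠ x := by
  intro h
  refine hx (hr.isUnit_sub_one.mul_right_eq_zero.mp ?_)
  rw [sub_mul, h, one_mul, sub_self]

namespace ZMod

theorem isNilpotent_natCast_of_forall_prime_dvd {n m : ℕ} [NeZero n]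
    (h : ∀ p : ℕ, p.Prime → p ∣ n → p ∣ m) : IsNilpotent (m : ZMod n) := by
  rcases eq_or_ne m 0 with rfl | hm
  · simp
  refine ⟨n, ?_⟩
  rw [← Nat.cast_pow, natCast_eq_zero_iff, Nat.dvd_pow_self_iff (NeZero.ne n) hm]
  intro p hp
  obtain ⟨hp, hpn, -⟩ := Nat.mem_primeFactors.mp hp
  exact Nat.mem_primeFactors.mpr ⟨hp, h p hp hpn, hm⟩

theorem natCast_gcd_eq_mul (m n : ℕ) :
    ((Nat.gcd m n : ℕ) : ZMod n) = m * (Nat.gcdA m n : ZMod n) := by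
  have h := congrArg (fun z : ℤ => (z : ZMod n)) (Nat.gcd_eq_gcd_ab m n)
  push_cast [natCast_self] at h
  simpa using h

theorem exists_nsmul_eq_of_gcd_dvd {n m : ℕ} [NeZero n] {a : ZMod n} (ha : Nat.gcd m n ∣ a.val) :
    ∃ b : ZMod n, m • b = a := by
  obtain ⟨s, hs⟩ := ha
  refine ⟨Nat.gcdA m n * s, ?_⟩
  rw [nsmul_eq_mul, ← mul_assoc, ← natCast_gcd_eq_mul, ← Nat.cast_mul, ← hs, natCast_zmod_val]

theorem card_nsmul_eq_of_gcd_dvd {n m : ℕ} [NeZero n] {a : ZMod n} (ha : Nat.gcd m n ∣ a.val) :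
    #{b : ZMod n | m • b = a} = Nat.gcd m n := by
  have hfiber := AddMonoidHom.card_fiber_eq_of_mem_range (nsmulAddMonoidHom (α := ZMod n) m)
    (exists_nsmul_eq_of_gcd_dvd ha) ⟨0, nsmul_zero m⟩
  have hker := IsAddCyclic.card_nsmulAddMonoidHom_ker (ZMod n) m
  rw [Nat.card_zmod, Nat.gcd_comm] at hker
  simp only [nsmulAddMonoidHom_apply] at hfiber
  rw [hfiber, ← hker, ← Fintype.card_subtype, ← Nat.card_eq_fintype_card]
  rfl

end ZMod

theorem stmt_7_general (n m : ℕ) [NeZero n]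
    (hp : ∀ p : ℕ, p.Prime → p ∣ n → p ∣ m)
    (a : ZMod n) (ha : a ≠ 0) (hka : Nat.gcd m n ∣ a.val) :
    (mGraph m (ZMod n)).degree a = Nat.gcd m n + 1 := by
  have hnil : IsNilpotent (m : ZMod n) := ZMod.isNilpotent_natCast_of_forall_prime_dvd hp
  have hfix : m • a ≠ a := by
    rw [nsmul_eq_mul]
    exact mul_ne_self_of_isNilpotent hnil ha
  have hfix₂ : m • m • a ≠ a := by
    rw [nsmul_eq_mul, nsmul_eq_mul, ← mul_assoc]
    exact mul_ne_self_of_isNilpotent ((Commute.all _ _).isNilpotent_mul_left hnil) ha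
  rw [mGraph_degree_eq_card_nsmul_eq_add_one hfix hfix₂, ZMod.card_nsmul_eq_of_gcd_dvd hka]

theorem stmt_7 (n m : ℕ) [NeZero n] (hn : 1 < n) (hm : 1 < m)
    (hp : ∀ p : ℕ, p.Prime → p ∣ n → p ∣ m)
    (a : ZMod n) (ha : a ≠ 0) (hka : Nat.gcd m n ∣ a.val) :
    (mGraph m (ZMod n)).degree a = Nat.gcd m n + 1 :=
  stmt_7_general n m hp a ha hka
end

section
/- Let n > 1, m > 1 be integers such that every prime factor of n divides m. Then the m-graph of ℤ/nℤ is a tree (it is connected and acyclic). -/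
namespace SimpleGraph

variable {V : Type*}

theorem isAcyclic_of_subsingleton_lower_neighbors {α : Type*} [LinearOrder α]
    {G : SimpleGraph V} (height : V → α)
    (hne : ∀ ⦃v w⦄, G.Adj v w → height v ≠ height w)
    (hlower : ∀ v, {w | G.Adj v w ∧ height w < height v}.Subsingleton) : G.IsAcyclic := by
  classical
  intro v c hc
  obtain ⟨u, hu, hmax⟩ := c.support.toFinset.exists_max_image height ⟨v, by simp⟩
  rw [List.mem_toFinset] at hu
  set c' := c.rotate u hu
  have hc' : c'.IsCycle := hc.rotate hu
  have hnil : ¬c'.Nil := hc'.not_nil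
  have lt_of_adj : ∀ w ∈ c'.support, G.Adj u w → height w < height u := fun w hw hadj =>
    (hmax w (List.mem_toFinset.mpr ((c.mem_support_rotate_iff u hu).mp hw))).lt_of_ne
      (hne hadj).symm
  have hsnd := c'.adj_snd hnil
  have hpen := (c'.adj_penultimate hnil).symm
  exact hc'.snd_ne_penultimate <| hlower u
    ⟨hsnd, lt_of_adj _ (c'.getVert_mem_support 1) hsnd⟩
    ⟨hpen, lt_of_adj _ (c'.getVert_mem_support _) hpen⟩

theorem reachable_fromRel_of_iterate_eq {f : V → V} {x y : V} {k : ℕ} (hk : f^[k] x = y) :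
    (fromRel fun x y => f x = y).Reachable x y := by
  induction k generalizing x with
  | zero => exact hk ▸ .rfl
  | succ k ih =>
    refine .trans ?_ (ih hk)
    by_cases hx : x = f x
    · rw [← hx]
    · exact Adj.reachable ⟨hx, .inl rfl⟩

theorem isTree_fromRel_of_forall_exists_iterate_eq {f : V → V} {c : V} (hc : f c = c)
    (hreach : ∀ x, ∃ k, f^[k] x = c) : (fromRel fun x y => f x = y).IsTree := by
  classical
  set G := fromRel fun x y => f x = y
  let height x := Nat.find (hreach x)
  have height_apply_lt : ∀ x, x ≠ f x → height (f x) < height x := by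
    intro x hx
    have hpos : Nat.find (hreach x) ≠ 0 := fun h0 =>
      hx <| by rw [show x = c from (Nat.find_eq_zero (hreach x)).mp h0, hc]
    obtain ⟨k, hk⟩ := Nat.exists_eq_add_one_of_ne_zero hpos
    have hspec : f^[k] (f x) = c := by
      have := Nat.find_spec (hreach x)
      rwa [hk] at this
    exact (Nat.find_le hspec).trans_lt (show k < Nat.find (hreach x) by omega)
  have eq_apply_of_lt : ∀ v w, G.Adj v w → height w < height v → w = f v := by
    rintro v w ⟨hvw, rfl | rfl⟩ hlt
    · rfl
    · exact absurd hlt (height_apply_lt w hvw.symm).not_gt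
  refine ⟨(connected_iff_exists_forall_reachable _).mpr ⟨c, fun x => ?_⟩, ?_⟩
  · obtain ⟨k, hk⟩ := hreach x
    exact (reachable_fromRel_of_iterate_eq hk).symm
  refine isAcyclic_of_subsingleton_lower_neighbors height ?_ fun v w₁ hw₁ w₂ hw₂ =>
    (eq_apply_of_lt v w₁ hw₁.1 hw₁.2).trans (eq_apply_of_lt v w₂ hw₂.1 hw₂.2).symm
  rintro v w ⟨hvw, rfl | rfl⟩
  · exact (height_apply_lt v hvw).ne'
  · exact (height_apply_lt w hvw.symm).ne

end SimpleGraph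

theorem mGraph_eq_fromRel (m : ℕ) (H : Type*) [AddCommGroup H] :
    mGraph m H = SimpleGraph.fromRel fun a b => m • a = b :=
  rfl

theorem mGraph_isTree_of_forall_exists_pow_nsmul_eq_zero {H : Type*} [AddCommGroup H] {m : ℕ}
    (h : ∀ x : H, ∃ k, m ^ k • x = 0) : (mGraph m H).IsTree := by
  rw [mGraph_eq_fromRel]
  exact SimpleGraph.isTree_fromRel_of_forall_exists_iterate_eq (smul_zero m)
    (by simpa only [smul_iterate_apply] using h)

theorem stmt_9 (n m : ℕ) (hn : 1 < n) (hm : 1 < m)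
    (hp : ∀ p : ℕ, p.Prime → p ∣ n → p ∣ m) :
    (mGraph m (ZMod n)).IsTree := by
  have hdvd : n ∣ m ^ n := (Nat.dvd_pow_self_iff (by omega) (by omega)).mpr fun p hpn => by
    rw [Nat.mem_primeFactors] at hpn ⊢
    exact ⟨hpn.1, hp p hpn.1 hpn.2.1, by omega⟩
  refine mGraph_isTree_of_forall_exists_pow_nsmul_eq_zero fun x => ⟨n, ?_⟩
  rw [nsmul_eq_mul, (ZMod.natCast_eq_zero_iff _ _).mpr hdvd, zero_mul]
end

section
/- Let n > 1, m > 1 be integers such that every prime factor of n divides m. Then the chromatic number of the m-graph of ℤ/nℤ equals 2 when n ≥ 2 (and in particular the graph is bipartite). -/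
namespace mGraph

variable {H : Type*} [AddCommGroup H] {m : ℕ}

noncomputable def height (m : ℕ) (a : H) : ℕ := sInf {k | m ^ k • a = 0}

section Torsion

variable (htors : ∀ a : H, ∃ k, m ^ k • a = 0)
include htors

theorem pow_height_nsmul (a : H) : m ^ height m a • a = 0 :=
  Nat.sInf_mem (htors a)

theorem height_eq_height_nsmul_add_one {a : H} (ha : a ≠ m • a) :
    height m a = height m (m • a) + 1 := by
  have hpos : height m a ≠ 0 := by
    intro h0
    have : a = 0 := by simpa [h0] using pow_height_nsmul htors a
    exact ha (by simp [this])
  obtain ⟨j, hj⟩ := Nat.exists_eq_add_one_of_ne_zero hpos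
  have hle : height m (m • a) ≤ j := Nat.sInf_le <| by
    change m ^ j • m • a = 0
    rw [← mul_smul, ← pow_succ, ← hj, pow_height_nsmul htors]
  have hge : height m a ≤ height m (m • a) + 1 := Nat.sInf_le <| by
    change m ^ (height m (m • a) + 1) • a = 0
    rw [pow_succ, mul_smul, pow_height_nsmul htors]
  omega

theorem colorable_two : (mGraph m H).Colorable 2 := by
  have parity : ∀ a : H, a ≠ m • a → (height m a : ZMod 2) ≠ height m (m • a) := by
    intro a ha
    rw [height_eq_height_nsmul_add_one htors ha, Nat.cast_succ, ne_eq, add_eq_left]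
    exact one_ne_zero
  let c : (mGraph m H).Coloring (ZMod 2) := SimpleGraph.Coloring.mk (fun a => height m a) <| by
    rintro a b ⟨hab, rfl | rfl⟩
    · exact parity a hab
    · exact (parity b hab.symm).symm
  simpa using c.colorable

theorem adj_nsmul {a : H} (ha : a ≠ 0) : (mGraph m H).Adj a (m • a) := by
  refine ⟨fun hfix => ha ?_, Or.inl rfl⟩
  have hpow : ∀ k : ℕ, m ^ k • a = a := by
    intro k
    induction k with
    | zero => simp
    | succ k ih => rw [pow_succ, mul_smul, ← hfix, ih]
  obtain ⟨k, hk⟩ := htors a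
  rw [← hpow k, hk]

theorem chromaticNumber_eq_two [Nontrivial H] : (mGraph m H).chromaticNumber = 2 := by
  obtain ⟨a, ha⟩ := exists_ne (0 : H)
  exact SimpleGraph.chromaticNumber_eq_two_iff.mpr
    ⟨colorable_two htors, SimpleGraph.ne_bot_iff_exists_adj.mpr ⟨a, m • a, adj_nsmul htors ha⟩⟩

end Torsion

end mGraph

theorem stmt_10 (n m : ℕ) (hn : 1 < n) (hm : 1 < m)
    (hp : ∀ p : ℕ, p.Prime → p ∣ n → p ∣ m) :
    (mGraph m (ZMod n)).chromaticNumber = 2 := by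
  have : Fact (1 < n) := ⟨hn⟩
  have hdvd : n ∣ m ^ n := (Nat.dvd_pow_self_iff (by omega) (by omega)).mpr fun p hpn => by
    obtain ⟨pp, hpdvd, -⟩ := Nat.mem_primeFactors.mp hpn
    exact Nat.mem_primeFactors.mpr ⟨pp, hp p pp hpdvd, by omega⟩
  refine mGraph.chromaticNumber_eq_two fun a => ⟨n, ?_⟩
  rw [nsmul_eq_mul, (ZMod.natCast_eq_zero_iff _ n).mpr hdvd, zero_mul]
end

section
/- Let n ≥ 2, m > 1 be integers such that every prime factor of n divides m, and let k = gcd(m, n). Then the m-graph of ℤ/nℤ is isomorphic, as a graph, to the k-graph of ℤ/nℤ. -/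
/-!
Write `m = k * u` in `ZMod n` with `k = gcd m n` and `u` a unit; `k` is nilpotent because every
prime factor of `n` divides it. Let `d x` be the least `j` with `k ^ j * x = 0`. Units preserve `d`
and multiplication by `k` lowers it by one, so `x ↦ u ^ d x * x` is a bijection carrying
multiplication by `k * u` to multiplication by `k`, and therefore the `m`-graph to the `k`-graph.
-/

def mGraph.isoOfConj {H H' : Type*} [AddCommGroup H] [AddCommGroup H'] {m k : ℕ} (e : H ≃ H')
    (he : ∀ x, e (m • x) = k • e x) : mGraph m H ≃g mGraph k H' where
  toEquiv := e
  map_rel_iff' := by simp only [mGraph, ← he, e.injective.ne_iff, e.injective.eq_iff]; simp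

section AnnIndex

variable {R : Type*} [CommMonoidWithZero R] {c x : R}

noncomputable def annIndex (c x : R) : ℕ := sInf {j | c ^ j * x = 0}

theorem annIndex_le {j : ℕ} (h : c ^ j * x = 0) : annIndex c x ≤ j := Nat.sInf_le h

theorem pow_annIndex_mul (hc : IsNilpotent c) : c ^ annIndex c x * x = 0 := by
  obtain ⟨N, hN⟩ := hc
  exact Nat.sInf_mem (s := {j | c ^ j * x = 0}) ⟨N, by simp [hN]⟩

theorem eq_zero_of_annIndex_eq_zero (hc : IsNilpotent c) (h : annIndex c x = 0) : x = 0 := by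
  simpa [h] using pow_annIndex_mul (x := x) hc

theorem annIndex_units_mul (u : Rˣ) : annIndex c (u * x) = annIndex c x := by
  simp only [annIndex, mul_left_comm _ (u : R), Units.mul_right_eq_zero]

theorem annIndex_self_mul (hc : IsNilpotent c) : annIndex c (c * x) = annIndex c x - 1 := by
  refine le_antisymm (annIndex_le ?_) ?_
  · rcases Nat.eq_zero_or_pos (annIndex c x) with h | h
    · simp [eq_zero_of_annIndex_eq_zero hc h]
    · rw [← mul_assoc, ← pow_succ, Nat.sub_add_cancel h, pow_annIndex_mul hc]
  · have : annIndex c x ≤ annIndex c (c * x) + 1 :=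
      annIndex_le (by rw [pow_succ, mul_assoc, pow_annIndex_mul hc])
    omega

end AnnIndex

section TwistEquiv

variable {R : Type*} [CommMonoidWithZero R]

noncomputable def twistEquiv (c : R) (u : Rˣ) : R ≃ R where
  toFun x := ↑(u ^ annIndex c x) * x
  invFun y := ↑(u⁻¹ ^ annIndex c y) * y
  left_inv x := by
    simp only
    rw [annIndex_units_mul, ← mul_assoc, ← Units.val_mul, inv_pow, inv_mul_cancel, Units.val_one,
      one_mul]
  right_inv y := by
    simp only
    rw [annIndex_units_mul, ← mul_assoc, ← Units.val_mul, inv_pow, mul_inv_cancel, Units.val_one,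
      one_mul]

theorem twistEquiv_mul_units_mul {c : R} (hc : IsNilpotent c) (u : Rˣ) (x : R) :
    twistEquiv c u (c * u * x) = c * twistEquiv c u x := by
  have hindex : annIndex c (c * u * x) = annIndex c x - 1 := by
    rw [mul_comm c, mul_assoc, annIndex_units_mul, annIndex_self_mul hc]
  simp only [twistEquiv, Equiv.coe_fn_mk, hindex]
  by_cases h : annIndex c x = 0
  · simp [eq_zero_of_annIndex_eq_zero hc h]
  · obtain ⟨d, hd⟩ := Nat.exists_eq_add_one_of_ne_zero h
    rw [hd, Nat.add_sub_cancel, pow_succ, Units.val_mul]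
    ac_rfl

end TwistEquiv

noncomputable def mGraph.isoOfNilpotent {R : Type*} [CommRing R] {m k : ℕ} {u : Rˣ}
    (hk : IsNilpotent (k : R)) (hmk : (m : R) = k * u) : mGraph m R ≃g mGraph k R :=
  mGraph.isoOfConj (twistEquiv (k : R) u) fun x => by
    rw [nsmul_eq_mul, nsmul_eq_mul, hmk, twistEquiv_mul_units_mul hk]

theorem ZMod.exists_natCast_eq_gcd_mul_unit (m n : ℕ) :
    ∃ u : (ZMod n)ˣ, (m : ZMod n) = Nat.gcd m n * u := by
  rcases eq_or_ne n 0 with rfl | hn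
  · exact ⟨1, by simp⟩
  have : NeZero n := ⟨hn⟩
  set k := m.gcd n
  have hkn : k * (n / k) = n := Nat.mul_div_cancel' (Nat.gcd_dvd_right m n)
  have hkm : k * (m / k) = m := Nat.mul_div_cancel' (Nat.gcd_dvd_left m n)
  have hdvd : n / k ∣ n := Nat.div_dvd_of_dvd (Nat.gcd_dvd_right m n)
  obtain ⟨u, hu⟩ := ZMod.unitsMap_surjective hdvd
    (ZMod.unitOfCoprime _ (Nat.coprime_div_gcd_div_gcd (Nat.gcd_pos_of_pos_right m (by omega))))
  have hval : (u : ZMod n).val ≡ m / k [MOD n / k] := by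
    rw [← ZMod.natCast_eq_natCast_iff, ZMod.natCast_val, ← ZMod.unitsMap_val hdvd, hu,
      ZMod.coe_unitOfCoprime]
  refine ⟨u, ?_⟩
  rw [← ZMod.natCast_zmod_val (u : ZMod n), ← Nat.cast_mul, ZMod.natCast_eq_natCast_iff]
  simpa only [hkn, hkm] using (hval.mul_left' k).symm

theorem ZMod.isNilpotent_gcd {m n : ℕ} (hp : ∀ p : ℕ, p.Prime → p ∣ n → p ∣ m) :
    IsNilpotent (Nat.gcd m n : ZMod n) := by
  rcases eq_or_ne n 0 with rfl | hn
  · -- in `ZMod 0 = ℤ` the hypothesis says every prime divides `m`, forcing `m = 0`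
    obtain ⟨p, hmp, hp'⟩ := Nat.exists_infinite_primes (m + 1)
    simp [Nat.eq_zero_of_dvd_of_lt (hp p hp' (dvd_zero p)) hmp]
  have hk : m.gcd n ≠ 0 := Nat.gcd_ne_zero_right hn
  refine ⟨n, ?_⟩
  rw [← Nat.cast_pow, ZMod.natCast_eq_zero_iff, Nat.dvd_pow_self_iff hn hk]
  intro p hpn
  have hpp := Nat.prime_of_mem_primeFactors hpn
  have hpn' := Nat.dvd_of_mem_primeFactors hpn
  exact Nat.mem_primeFactors.mpr ⟨hpp, Nat.dvd_gcd (hp p hpp hpn') hpn', hk⟩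

theorem stmt_12_general (n m : ℕ)
    (hp : ∀ p : ℕ, p.Prime → p ∣ n → p ∣ m) :
    Nonempty (mGraph m (ZMod n) ≃g mGraph (Nat.gcd m n) (ZMod n)) := by
  obtain ⟨u, hu⟩ := ZMod.exists_natCast_eq_gcd_mul_unit m n
  exact ⟨mGraph.isoOfNilpotent (ZMod.isNilpotent_gcd hp) hu⟩

theorem stmt_12 (n m : ℕ) (hn : 2 ≤ n) (hm : 1 < m)
    (hp : ∀ p : ℕ, p.Prime → p ∣ n → p ∣ m) :
    Nonempty (mGraph m (ZMod n) ≃g mGraph (Nat.gcd m n) (ZMod n)) :=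
  stmt_12_general n m hp
end

section
/- Let n ≥ 2, m > 1 be integers such that every prime factor of n divides m, let k = gcd(m, n), and let w be the least positive integer with n dividing k^w. Then in the m-graph of ℤ/nℤ, the distance from 1 to 0 equals w, the distance from n−1 to 0 equals w, and for any nonzero a ∈ ℤ/nℤ with k ∤ a, the distance from a to 0 equals the least positive integer r such that n divides a·m^r; moreover the diameter of the m-graph is at most 2w. -/
namespace mGraph

variable {H : Type*} [AddCommGroup H] {m : ℕ}

lemma Walk.exists_pow_length_smul_eq {a b : H} (p : (mGraph m H).Walk a b) :
    ∃ t : ℕ, m ^ p.length • a = m ^ t • b := by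
  induction p with
  | nil => exact ⟨0, rfl⟩
  | @cons u v b h q ih =>
    obtain ⟨t, ht⟩ := ih
    rw [SimpleGraph.Walk.length_cons, pow_succ, mul_smul]
    rcases h.2 with huv | hvu
    · exact ⟨t, by rw [huv, ht]⟩
    · refine ⟨t + 2, ?_⟩
      rw [← hvu]
      calc m ^ q.length • m • m • v = (m ^ 2 * m ^ q.length) • v := by
            rw [← mul_smul, ← mul_smul]; congr 1; ring
        _ = m ^ (t + 2) • b := by rw [mul_smul, ht, ← mul_smul, ← pow_add, add_comm]

lemma Walk.pow_length_smul_eq_zero {a : H} (p : (mGraph m H).Walk a 0) :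
    m ^ p.length • a = 0 := by
  obtain ⟨t, ht⟩ := Walk.exists_pow_length_smul_eq p
  rw [ht, smul_zero]

lemma exists_walk_length_le {r : ℕ} {a : H} (h : m ^ r • a = 0) :
    ∃ p : (mGraph m H).Walk a 0, p.length ≤ r := by
  induction r generalizing a with
  | zero =>
    rw [pow_zero, one_smul] at h
    subst h
    exact ⟨.nil, le_rfl⟩
  | succ s ih =>
    obtain ⟨q, hq⟩ := ih (a := m • a) (by rwa [← mul_smul, ← pow_succ])
    by_cases hfix : a = m • a
    · exact ⟨q.copy hfix.symm rfl, by rw [SimpleGraph.Walk.length_copy]; omega⟩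
    · have hadj : (mGraph m H).Adj a (m • a) := ⟨hfix, .inl rfl⟩
      exact ⟨.cons hadj q, by rw [SimpleGraph.Walk.length_cons]; omega⟩

lemma dist_zero_eq {r : ℕ} {a : H} (hr : m ^ r • a = 0)
    (hmin : ∀ s : ℕ, m ^ s • a = 0 → r ≤ s) : (mGraph m H).dist a 0 = r := by
  obtain ⟨p, hp⟩ := exists_walk_length_le hr
  obtain ⟨q, hq⟩ := SimpleGraph.Reachable.exists_walk_length_eq_dist ⟨p⟩
  refine le_antisymm ((SimpleGraph.dist_le p).trans hp) ?_
  rw [← hq]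
  exact hmin _ (Walk.pow_length_smul_eq_zero q)

lemma diam_le {r : ℕ} (h : ∀ a : H, m ^ r • a = 0) : (mGraph m H).diam ≤ 2 * r := by
  refine ENat.toNat_le_of_le_natCast (SimpleGraph.ediam_le_of_edist_le fun a b => ?_)
  obtain ⟨p, hp⟩ := exists_walk_length_le (h a)
  obtain ⟨q, hq⟩ := exists_walk_length_le (h b)
  refine (SimpleGraph.edist_le (p.append q.reverse)).trans ?_
  rw [SimpleGraph.Walk.length_append, SimpleGraph.Walk.length_reverse]
  exact_mod_cast (by omega : p.length + q.length ≤ 2 * r)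

end mGraph

lemma Nat.dvd_gcd_pow_of_dvd_pow {n m s : ℕ} (hs : s ≠ 0) (h : n ∣ m ^ s) :
    n ∣ Nat.gcd m n ^ s := by
  rw [← Nat.pow_gcd_pow]
  exact Nat.dvd_gcd h (dvd_pow_self n hs)

lemma ZMod.nsmul_eq_zero_iff_dvd_val_mul {n : ℕ} [NeZero n] (a : ZMod n) (k : ℕ) :
    k • a = 0 ↔ n ∣ a.val * k := by
  rw [← ZMod.natCast_eq_zero_iff, Nat.cast_mul, ZMod.natCast_zmod_val, nsmul_eq_mul, mul_comm]

theorem stmt_13_general (n m w : ℕ) (hn : 2 ≤ n)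
    (hw2 : n ∣ (Nat.gcd m n) ^ w)
    (hwleast : ∀ v : ℕ, 0 < v → n ∣ (Nat.gcd m n) ^ v → w ≤ v) :
    (mGraph m (ZMod n)).dist 1 0 = w ∧
    (mGraph m (ZMod n)).dist ((n : ZMod n) - 1) 0 = w ∧
    (∀ a : ZMod n, a ≠ 0 → ¬ Nat.gcd m n ∣ a.val →
      ∀ r : ℕ, 0 < r → n ∣ a.val * m ^ r →
        (∀ s : ℕ, 0 < s → n ∣ a.val * m ^ s → r ≤ s) →
        (mGraph m (ZMod n)).dist a 0 = r) ∧
    (mGraph m (ZMod n)).diam ≤ 2 * w := by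
  have : NeZero n := ⟨by omega⟩
  have smul_one_iff (k : ℕ) : k • (1 : ZMod n) = 0 ↔ n ∣ k := by
    rw [nsmul_eq_mul, mul_one, ZMod.natCast_eq_zero_iff]
  have hmw : n ∣ m ^ w := hw2.trans (pow_dvd_pow_of_dvd (Nat.gcd_dvd_left m n) w)
  have hmin (s : ℕ) (hs : n ∣ m ^ s) : w ≤ s := by
    rcases Nat.eq_zero_or_pos s with rfl | hs0
    · rw [pow_zero, Nat.dvd_one] at hs
      omega
    · exact hwleast s hs0 (Nat.dvd_gcd_pow_of_dvd_pow hs0.ne' hs)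
  refine ⟨?_, ?_, ?_, ?_⟩
  · exact mGraph.dist_zero_eq ((smul_one_iff _).2 hmw) fun s hs => hmin s ((smul_one_iff _).1 hs)
  · rw [ZMod.natCast_self, zero_sub]
    refine mGraph.dist_zero_eq (by rw [smul_neg, (smul_one_iff _).2 hmw, neg_zero]) fun s hs => ?_
    rw [smul_neg, neg_eq_zero] at hs
    exact hmin s ((smul_one_iff _).1 hs)
  · intro a ha _ r _ hr hrmin
    refine mGraph.dist_zero_eq ((ZMod.nsmul_eq_zero_iff_dvd_val_mul a _).2 hr) fun s hs => ?_
    rcases Nat.eq_zero_or_pos s with rfl | hs0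
    · rw [pow_zero, one_smul] at hs
      exact absurd hs ha
    · exact hrmin s hs0 ((ZMod.nsmul_eq_zero_iff_dvd_val_mul a _).1 hs)
  · exact mGraph.diam_le fun a => by
      rw [nsmul_eq_mul, (ZMod.natCast_eq_zero_iff _ n).2 hmw, zero_mul]

theorem stmt_13 (n m w : ℕ) [NeZero n] (hn : 2 ≤ n) (hm : 1 < m)
    (hp : ∀ p : ℕ, p.Prime → p ∣ n → p ∣ m)
    (hw1 : 0 < w) (hw2 : n ∣ (Nat.gcd m n) ^ w)
    (hwleast : ∀ v : ℕ, 0 < v → n ∣ (Nat.gcd m n) ^ v → w ≤ v) :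
    (mGraph m (ZMod n)).dist 1 0 = w ∧
    (mGraph m (ZMod n)).dist ((n : ZMod n) - 1) 0 = w ∧
    (∀ a : ZMod n, a ≠ 0 → ¬ Nat.gcd m n ∣ a.val →
      ∀ r : ℕ, 0 < r → n ∣ a.val * m ^ r →
        (∀ s : ℕ, 0 < s → n ∣ a.val * m ^ s → r ≤ s) →
        (mGraph m (ZMod n)).dist a 0 = r) ∧
    (mGraph m (ZMod n)).diam ≤ 2 * w :=
  stmt_13_general n m w hn hw2 hwleast
end

section
/- Let n = 2^w for some integer w ≥ 2 and let m > 1 be even with gcd(m, n) = 2. Then the diameter of the m-graph of ℤ/nℤ equals 2(w − 1). -/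
/-!
Write `m = 2u` with `u` odd and `c = 2^(w-1)`. For every `x`, the vertex `m^(w-2) x` is a multiple
of `2^(w-2)`; such an element is either `0` or `c` (and `0 ~ c` since `m c = 0`), or is sent to `c`
by one multiplication by `m`. So every vertex is within `w - 1` of `c`, and the diameter is at
most `2(w-1)`. Conversely, a walk of length `ℓ` from `a` to `b` yields `m^i a = m^j b` with
`i + j ≤ ℓ`; for `a = 1`, `b = -1` this says `2^w ∣ m^i + m^j`, and the power of `2` dividing
`m^i + m^j` is `2^min(i,j)` if `i ≠ j` and `2^(i+1)` if `i = j`, forcing `i + j ≥ 2(w-1)`.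
-/

namespace mGraph

variable {m : ℕ} {H : Type*} [AddCommGroup H]

lemma edist_le_one_of_smul_eq {a b : H} (h : m • a = b) : (mGraph m H).edist a b ≤ 1 := by
  rw [SimpleGraph.edist_le_one_iff_adj_or_eq]
  by_cases hab : a = b
  · exact Or.inr hab
  · exact Or.inl ⟨hab, Or.inl h⟩

lemma edist_pow_smul_le (x : H) (k : ℕ) : (mGraph m H).edist x (m ^ k • x) ≤ k := by
  induction k with
  | zero => simp
  | succ k ih =>
    calc (mGraph m H).edist x (m ^ (k + 1) • x)
        ≤ (mGraph m H).edist x (m ^ k • x)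
          + (mGraph m H).edist (m ^ k • x) (m ^ (k + 1) • x) :=
          SimpleGraph.edist_triangle
      _ ≤ k + 1 := add_le_add ih (edist_le_one_of_smul_eq (by rw [pow_succ', mul_smul]))
      _ = (k + 1 : ℕ) := by push_cast; rfl

lemma exists_pow_smul_eq_of_walk {a b : H} (p : (mGraph m H).Walk a b) :
    ∃ i j : ℕ, i + j ≤ p.length ∧ m ^ i • a = m ^ j • b := by
  induction p with
  | nil => exact ⟨0, 0, le_rfl, rfl⟩
  | @cons a c b hac q ih =>
    obtain ⟨i, j, hle, heq⟩ := ih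
    rw [SimpleGraph.Walk.length_cons]
    rcases hac.2 with hac | hca
    · exact ⟨i + 1, j, by omega, by rw [pow_succ, mul_smul, hac, heq]⟩
    · refine ⟨i, j + 1, by omega, ?_⟩
      rw [← hca, smul_comm, heq, ← mul_smul, ← pow_succ']

end mGraph

lemma le_of_two_pow_dvd_two_pow_mul_odd {w k d : ℕ} (hd : Odd d) (h : 2 ^ w ∣ 2 ^ k * d) :
    w ≤ k :=
  (Nat.pow_dvd_pow_iff_le_right one_lt_two).mp <|
    ((Nat.coprime_two_left.mpr hd).pow_left w).dvd_of_dvd_mul_right h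

lemma le_add_of_two_pow_dvd_pow_add_pow {u w i j : ℕ} (hu : Odd u)
    (h : 2 ^ w ∣ (2 * u) ^ i + (2 * u) ^ j) : 2 * w ≤ i + j + 2 := by
  wlog hij : i ≤ j generalizing i j
  · have := this (by rwa [add_comm]) (by omega)
    omega
  obtain ⟨d, rfl⟩ := Nat.exists_eq_add_of_le hij
  rcases d with _ | d
  · have hsum : (2 * u) ^ i + (2 * u) ^ (i + 0) = 2 ^ (i + 1) * u ^ i := by ring
    have := le_of_two_pow_dvd_two_pow_mul_odd hu.pow (hsum ▸ h)
    omega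
  · have hsum : (2 * u) ^ i + (2 * u) ^ (i + (d + 1)) =
        2 ^ i * (u ^ i * (2 * (2 ^ d * u ^ (d + 1)) + 1)) := by ring
    have := le_of_two_pow_dvd_two_pow_mul_odd (hu.pow.mul (odd_two_mul_add_one _)) (hsum ▸ h)
    omega

lemma ZMod.natCast_two_pow_mul_of_even {k a : ℕ} (ha : Even a) :
    ((2 ^ k * a : ℕ) : ZMod (2 ^ (k + 1))) = 0 := by
  obtain ⟨t, rfl⟩ := ha
  rw [ZMod.natCast_eq_zero_iff]
  exact ⟨t, by ring⟩

lemma ZMod.natCast_two_pow_mul_of_odd {k a : ℕ} (ha : Odd a) :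
    ((2 ^ k * a : ℕ) : ZMod (2 ^ (k + 1))) = 2 ^ k := by
  obtain ⟨t, rfl⟩ := ha
  have h := ZMod.natCast_self (2 ^ (k + 1))
  push_cast at h ⊢
  linear_combination t * h

lemma exists_odd_eq_two_mul_of_gcd_two_pow_eq_two {m k : ℕ} (h : Nat.gcd m (2 ^ (k + 2)) = 2) :
    ∃ u, Odd u ∧ m = 2 * u := by
  obtain ⟨u, rfl⟩ : 2 ∣ m := h ▸ Nat.gcd_dvd_left _ _
  refine ⟨u, ?_, rfl⟩
  rw [pow_succ', Nat.gcd_mul_left, Nat.mul_eq_left two_ne_zero] at h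
  exact Nat.coprime_two_right.mp ((Nat.coprime_pow_right_iff k.succ_pos _ _).mp h)

namespace mGraph

lemma edist_two_pow_mul_le_one {u : ℕ} (hu : Odd u) (k b : ℕ) :
    (mGraph (2 * u) (ZMod (2 ^ (k + 2)))).edist ((2 ^ k * b : ℕ) : ZMod (2 ^ (k + 2)))
      (2 ^ (k + 1)) ≤ 1 := by
  rcases Nat.even_or_odd b with ⟨t, rfl⟩ | hb
  · rw [show 2 ^ k * (t + t) = 2 ^ (k + 1) * t by ring]
    rcases Nat.even_or_odd t with ht | ht
    · rw [ZMod.natCast_two_pow_mul_of_even ht, SimpleGraph.edist_comm]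
      apply edist_le_one_of_smul_eq
      have h := ZMod.natCast_two_pow_mul_of_even (k := k + 1) (even_two_mul u)
      push_cast at h
      rw [nsmul_eq_mul]
      push_cast
      linear_combination h
    · rw [ZMod.natCast_two_pow_mul_of_odd ht, SimpleGraph.edist_self]
      exact zero_le_one
  · apply edist_le_one_of_smul_eq
    have h := ZMod.natCast_two_pow_mul_of_odd (k := k + 1) (hu.mul hb)
    push_cast at h
    rw [nsmul_eq_mul]
    push_cast
    linear_combination h

lemma eccent_two_pow_le {u : ℕ} (hu : Odd u) (k : ℕ) :
    (mGraph (2 * u) (ZMod (2 ^ (k + 2)))).eccent (2 ^ (k + 1)) ≤ (k + 1 : ℕ) := by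
  rw [SimpleGraph.eccent_le_iff]
  intro x
  rw [SimpleGraph.edist_comm, Nat.cast_succ]
  have hx : (2 * u) ^ k • x = ((2 ^ k * (u ^ k * x.val) : ℕ) : ZMod (2 ^ (k + 2))) := by
    rw [nsmul_eq_mul]
    push_cast
    rw [ZMod.natCast_zmod_val]
    ring
  calc _ ≤ (mGraph (2 * u) _).edist x ((2 * u) ^ k • x)
        + (mGraph (2 * u) _).edist ((2 * u) ^ k • x) (2 ^ (k + 1)) := SimpleGraph.edist_triangle
    _ ≤ k + 1 := by
      gcongr
      · exact edist_pow_smul_le x k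
      · rw [hx]
        exact edist_two_pow_mul_le_one hu k _

lemma le_edist_one_neg_one {u : ℕ} (hu : Odd u) (w : ℕ) :
    (2 * (w - 1) : ℕ) ≤ (mGraph (2 * u) (ZMod (2 ^ w))).edist 1 (-1) := by
  by_cases hr : (mGraph (2 * u) (ZMod (2 ^ w))).Reachable 1 (-1)
  · obtain ⟨p, hp⟩ := hr.exists_walk_length_eq_edist
    obtain ⟨i, j, hle, heq⟩ := exists_pow_smul_eq_of_walk p
    have hdvd : 2 ^ w ∣ (2 * u) ^ i + (2 * u) ^ j := by
      rw [← ZMod.natCast_eq_zero_iff, Nat.cast_add, ← eq_neg_iff_add_eq_zero]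
      simpa using heq
    have := le_add_of_two_pow_dvd_pow_add_pow hu hdvd
    rw [← hp]
    exact_mod_cast (by omega : 2 * (w - 1) ≤ p.length)
  · simp [SimpleGraph.edist_eq_top_of_not_reachable hr]

end mGraph

theorem stmt_14_general (n m w : ℕ) (hw : 2 ≤ w) (hn : n = 2 ^ w)
    (hk : Nat.gcd m n = 2) :
    (mGraph m (ZMod n)).diam = 2 * (w - 1) := by
  obtain ⟨k, rfl⟩ : ∃ k, w = k + 2 := ⟨w - 2, by omega⟩
  subst hn
  obtain ⟨u, hu, rfl⟩ := exists_odd_eq_two_mul_of_gcd_two_pow_eq_two hk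
  have hediam : (mGraph (2 * u) (ZMod (2 ^ (k + 2)))).ediam = (2 * (k + 2 - 1) : ℕ) := by
    refine le_antisymm ?_
      ((mGraph.le_edist_one_neg_one hu (k + 2)).trans SimpleGraph.edist_le_ediam)
    calc _ ≤ 2 * (mGraph (2 * u) (ZMod (2 ^ (k + 2)))).eccent (2 ^ (k + 1)) :=
          SimpleGraph.ediam_le_two_mul_eccent _
      _ ≤ 2 * (k + 1 : ℕ) := by gcongr; exact mGraph.eccent_two_pow_le hu k
      _ = (2 * (k + 2 - 1) : ℕ) := by push_cast; rfl
  rw [SimpleGraph.diam, hediam, ENat.toNat_natCast]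

theorem stmt_14 (n m w : ℕ) (hw : 2 ≤ w) (hn : n = 2 ^ w)
    (hm : 1 < m) (hme : 2 ∣ m) (hk : Nat.gcd m n = 2) :
    (mGraph m (ZMod n)).diam = 2 * (w - 1) :=
  stmt_14_general n m w hw hn hk
end

section
/- Let k > 2 and n = k^w for some integer w ≥ 1, and suppose every prime factor of n divides k. Then the diameter of the k-graph of ℤ/nℤ equals 2w. -/
/-!
Every vertex `a` reaches `0 = k ^ w • a` in `w` upward steps, so the diameter is at most `2w`.
Conversely, along any walk from `a` to `b` one can cancel each downward step against an earlier
upward one, so a walk of length `ℓ` gives `k ^ s • a = k ^ t • b` with `s + t ≤ ℓ`. For `a = 1`,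
`b = -1` this says `k ^ w ∣ k ^ s + k ^ t`, which for `k > 2` forces `s, t ≥ w`.
-/

namespace Nat

lemma not_pow_succ_dvd_pow_add_pow {k s t : ℕ} (hk : 2 < k) (hst : s ≤ t) :
    ¬ k ^ (s + 1) ∣ k ^ s + k ^ t := by
  obtain ⟨d, rfl⟩ := Nat.exists_eq_add_of_le hst
  rw [pow_succ, pow_add, ← mul_one_add, Nat.mul_dvd_mul_iff_left (by positivity)]
  intro hdvd
  cases d with
  | zero => exact absurd (Nat.le_of_dvd two_pos hdvd) (by omega)
  | succ d =>
    have : k ∣ 1 := (Nat.dvd_add_left (dvd_pow_self k d.succ_ne_zero)).mp hdvd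
    exact absurd (Nat.le_of_dvd one_pos this) (by omega)

lemma le_of_pow_dvd_pow_add_pow {k s t w : ℕ} (hk : 2 < k) (h : k ^ w ∣ k ^ s + k ^ t) :
    w ≤ s ∧ w ≤ t := by
  wlog hst : s ≤ t generalizing s t
  · exact (this (add_comm (k ^ s) _ ▸ h) (le_of_not_ge hst)).symm
  suffices w ≤ s from ⟨this, this.trans hst⟩
  by_contra! hsw
  exact not_pow_succ_dvd_pow_add_pow hk hst ((pow_dvd_pow k hsw).trans h)

end Nat

section mGraph

variable {H : Type*} [AddCommGroup H] (k : ℕ)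

lemma mGraph_edist_smul_le_one (a : H) : (mGraph k H).edist a (k • a) ≤ 1 := by
  rw [SimpleGraph.edist_le_one_iff_adj_or_eq]
  by_cases h : a = k • a
  · exact Or.inr h
  · exact Or.inl ⟨h, Or.inl rfl⟩

lemma mGraph_edist_pow_smul_le (a : H) (s : ℕ) : (mGraph k H).edist a (k ^ s • a) ≤ s := by
  induction s with
  | zero => simp
  | succ s ih =>
    calc (mGraph k H).edist a (k ^ (s + 1) • a)
        ≤ (mGraph k H).edist a (k ^ s • a) + (mGraph k H).edist (k ^ s • a) (k • k ^ s • a) := by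
          rw [← mul_smul, ← pow_succ']
          exact SimpleGraph.edist_triangle
      _ ≤ s + 1 := add_le_add ih (mGraph_edist_smul_le_one k _)
      _ = (s + 1 : ℕ) := by push_cast; rfl

lemma mGraph_ediam_le (w : ℕ) (h : ∀ a : H, k ^ w • a = 0) :
    (mGraph k H).ediam ≤ (2 * w : ℕ) := by
  refine SimpleGraph.ediam_le_of_edist_le fun u v => ?_
  calc (mGraph k H).edist u v ≤ (mGraph k H).edist u 0 + (mGraph k H).edist 0 v :=
        SimpleGraph.edist_triangle
    _ ≤ w + w := by
        gcongr
        · simpa [h u] using mGraph_edist_pow_smul_le k u w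
        · simpa [h v, SimpleGraph.edist_comm] using mGraph_edist_pow_smul_le k v w
    _ = (2 * w : ℕ) := by push_cast; ring

/-- Each step `v = k • u` raises the exponent on the left; each step `u = k • v` lowers it, or, if
it is already `0`, raises the exponent on the right. -/
lemma exists_pow_smul_eq_of_mGraph_walk {a b : H} (p : (mGraph k H).Walk a b) :
    ∃ s t : ℕ, s + t ≤ p.length ∧ k ^ s • a = k ^ t • b := by
  induction p with
  | nil => exact ⟨0, 0, le_rfl, rfl⟩
  | @cons u v b hadj p ih =>
    obtain ⟨s, t, hlen, heq⟩ := ih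
    rw [SimpleGraph.Walk.length_cons]
    rcases hadj.2 with hup | hdown
    · exact ⟨s + 1, t, by omega, by rw [pow_succ, mul_smul, hup, heq]⟩
    · cases s with
      | zero =>
        refine ⟨0, t + 1, by omega, ?_⟩
        rw [pow_zero, one_smul] at heq ⊢
        rw [← hdown, heq, ← mul_smul, ← pow_succ']
      | succ s => exact ⟨s, t, by omega, by rw [← hdown, ← mul_smul, ← pow_succ, heq]⟩

end mGraph

lemma mGraph_zmod_two_mul_le_length {k w : ℕ} (hk : 2 < k)
    (p : (mGraph k (ZMod (k ^ w))).Walk 1 (-1)) : 2 * w ≤ p.length := by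
  obtain ⟨s, t, hlen, heq⟩ := exists_pow_smul_eq_of_mGraph_walk k p
  have hdvd : k ^ w ∣ k ^ s + k ^ t := by
    rw [← ZMod.natCast_eq_zero_iff]
    simp only [nsmul_eq_mul, mul_one, mul_neg] at heq
    rw [Nat.cast_add, heq, neg_add_cancel]
  have := Nat.le_of_pow_dvd_pow_add_pow hk hdvd
  omega

lemma zmod_pow_smul_eq_zero (k w : ℕ) (a : ZMod (k ^ w)) : k ^ w • a = 0 := by
  rw [nsmul_eq_mul, ZMod.natCast_self, zero_mul]

theorem stmt_15_general (n k w : ℕ) (hk : 2 < k) (hn : n = k ^ w) :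
    (mGraph k (ZMod n)).diam = 2 * w := by
  subst hn
  have hediam := mGraph_ediam_le k w (zmod_pow_smul_eq_zero k w)
  have hne : (mGraph k (ZMod (k ^ w))).ediam ≠ ⊤ :=
    ne_top_of_le_ne_top (ENat.natCast_ne_top _) hediam
  apply le_antisymm
  · simpa [SimpleGraph.diam] using ENat.toNat_le_toNat hediam (ENat.natCast_ne_top _)
  · obtain ⟨p, hp⟩ :=
      (SimpleGraph.preconnected_of_ediam_ne_top hne 1 (-1)).exists_walk_length_eq_dist
    calc 2 * w ≤ p.length := mGraph_zmod_two_mul_le_length hk p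
      _ = _ := hp
      _ ≤ _ := SimpleGraph.dist_le_diam hne

theorem stmt_15 (n k w : ℕ) (hk : 2 < k) (hw : 1 ≤ w) (hn : n = k ^ w)
    (hp : ∀ p : ℕ, p.Prime → p ∣ n → p ∣ k) :
    (mGraph k (ZMod n)).diam = 2 * w :=
  stmt_15_general n k w hk hn
end

section
/- For every integer d ≥ 1 there exist an integer m > 1 and a positive integer n such that the m-graph of ℤ/nℤ is connected and has diameter exactly d. -/
/-!
Take `m = 4` and `n = 2 ^ d`. Repeated multiplication by 4 brings every element to 0 in
`⌈d/2⌉` steps and every even element in `⌊d/2⌋` steps, and two elements with even difference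
meet after `⌊d/2⌋` steps from each side; this bounds all distances by `d`.
For the lower bound let `h x` be the least `j` with `2 ^ j * x = 0`. An edge `x — 4x` lowers `h`
by 2 (truncated at 0), so the potential `(-1) ^ h ⌈h / 2⌉` changes by at most 1 along edges,
while it differs by `d` between `1` (where `h = d`) and `2` (where `h = d - 1`).
-/

namespace SimpleGraph

variable {V : Type*} {G : SimpleGraph V} {f : V → ℤ}

lemma Walk.abs_sub_le_length (hf : ∀ x y, G.Adj x y → |f x - f y| ≤ 1) {u v : V}
    (p : G.Walk u v) : |f u - f v| ≤ p.length := by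
  induction p with
  | nil => simp
  | @cons a b c hab q ih =>
    calc |f a - f c| ≤ |f a - f b| + |f b - f c| := abs_sub_le _ _ _
      _ ≤ 1 + q.length := add_le_add (hf a b hab) ih
      _ = (cons hab q).length := by rw [Walk.length_cons]; push_cast; ring

lemma le_edist_of_le_abs_sub (hf : ∀ x y, G.Adj x y → |f x - f y| ≤ 1) {u v : V} {n : ℕ}
    (hn : (n : ℤ) ≤ |f u - f v|) : (n : ℕ∞) ≤ G.edist u v :=
  le_iInf fun p => Nat.cast_le.mpr (by exact_mod_cast hn.trans (p.abs_sub_le_length hf))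

end SimpleGraph

section mGraph

variable {m : ℕ} {H : Type*} [AddCommGroup H]

lemma mGraph_edist_pow_nsmul_le (x : H) (j : ℕ) : (mGraph m H).edist x ((m ^ j) • x) ≤ j := by
  induction j generalizing x with
  | zero => simp
  | succ j ih =>
    have hstep : (mGraph m H).edist x (m • x) ≤ 1 := by
      by_cases h : x = m • x
      · rw [← h, SimpleGraph.edist_self]; exact zero_le_one
      · exact SimpleGraph.edist_le_one_iff_adj_or_eq.mpr (.inl ⟨h, .inl rfl⟩)
    calc (mGraph m H).edist x ((m ^ (j + 1)) • x)
        ≤ (mGraph m H).edist x (m • x) + (mGraph m H).edist (m • x) ((m ^ j) • m • x) := by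
          rw [← mul_nsmul, ← pow_succ']; exact SimpleGraph.edist_triangle
      _ ≤ 1 + j := add_le_add hstep (ih _)
      _ = (j + 1 : ℕ) := by push_cast; ring

lemma mGraph_edist_le_of_pow_nsmul_eq {u v : H} {j : ℕ} (h : (m ^ j) • u = (m ^ j) • v) :
    (mGraph m H).edist u v ≤ 2 * j :=
  calc (mGraph m H).edist u v
      ≤ (mGraph m H).edist u ((m ^ j) • u) + (mGraph m H).edist ((m ^ j) • v) v := by
        rw [← h]; exact SimpleGraph.edist_triangle
    _ ≤ j + j := add_le_add (mGraph_edist_pow_nsmul_le u j)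
        (SimpleGraph.edist_comm.trans_le (mGraph_edist_pow_nsmul_le v j))
    _ = 2 * j := (two_mul _).symm

end mGraph

section annihilatingExponent

variable {R : Type*} [CommSemiring R] {p : R}

noncomputable def annihilatingExponent (p x : R) : ℕ := sInf {j | p ^ j * x = 0}

lemma pow_mul_eq_zero_iff_annihilatingExponent_le (hp : IsNilpotent p) {x : R} {j : ℕ} :
    p ^ j * x = 0 ↔ annihilatingExponent p x ≤ j := by
  obtain ⟨n, hn⟩ := hp
  have hmem : p ^ annihilatingExponent p x * x = 0 :=
    Nat.sInf_mem (s := {j | p ^ j * x = 0}) ⟨n, by simp [hn]⟩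
  refine ⟨fun h => Nat.sInf_le h, fun h => ?_⟩
  rw [← Nat.sub_add_cancel h, pow_add, mul_assoc, hmem, mul_zero]

lemma annihilatingExponent_pow_mul (hp : IsNilpotent p) (x : R) (k : ℕ) :
    annihilatingExponent p (p ^ k * x) = annihilatingExponent p x - k :=
  eq_of_forall_ge_iff fun j => by
    rw [← pow_mul_eq_zero_iff_annihilatingExponent_le hp, ← mul_assoc, ← pow_add,
      pow_mul_eq_zero_iff_annihilatingExponent_le hp, Nat.sub_le_iff_le_add]

end annihilatingExponent

def zigzag (k : ℕ) : ℤ := (-1) ^ k * ((k + 1) / 2 : ℕ)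

lemma abs_zigzag_sub_zigzag_sub_two_le (k : ℕ) : |zigzag k - zigzag (k - 2)| ≤ 1 := by
  rcases k with _ | _ | k
  · simp [zigzag]
  · simp [zigzag]
  · have hdiv : (k + 2 + 1) / 2 = (k + 1) / 2 + 1 := by omega
    have : zigzag (k + 2) - zigzag k = (-1) ^ k := by
      simp only [zigzag, hdiv, pow_add]; push_cast; ring
    show |zigzag (k + 2) - zigzag k| ≤ 1
    rw [this, abs_neg_one_pow]

lemma abs_zigzag_sub_zigzag_pred (d : ℕ) : |zigzag d - zigzag (d - 1)| = d := by
  rcases d with _ | d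
  · simp [zigzag]
  · have hsum : (((d + 1 + 1) / 2 : ℕ) : ℤ) + ((d + 1) / 2 : ℕ) = d + 1 := by
      exact_mod_cast (by omega : (d + 1 + 1) / 2 + (d + 1) / 2 = d + 1)
    have : zigzag (d + 1) - zigzag d = (-1) ^ (d + 1) * ((d : ℤ) + 1) := by
      simp only [zigzag]; rw [pow_succ]; linear_combination (-(-1) ^ d) * hsum
    rw [Nat.add_sub_cancel, this, abs_mul, abs_neg_one_pow, one_mul]
    push_cast
    exact abs_of_nonneg (by positivity)

section mGraphPotential

variable {R : Type*} [CommRing R] {p : R} {m : ℕ}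

lemma abs_zigzag_annihilatingExponent_sub_le_of_adj (hp : IsNilpotent p) (hm : (m : R) = p ^ 2)
    {x y : R} (h : (mGraph m R).Adj x y) :
    |zigzag (annihilatingExponent p x) - zigzag (annihilatingExponent p y)| ≤ 1 := by
  have step : ∀ x : R, |zigzag (annihilatingExponent p x) -
      zigzag (annihilatingExponent p (m • x))| ≤ 1 := fun x => by
    rw [nsmul_eq_mul, hm, annihilatingExponent_pow_mul hp]
    exact abs_zigzag_sub_zigzag_sub_two_le _
  obtain ⟨-, rfl | rfl⟩ := h
  · exact step x
  · rw [abs_sub_comm]; exact step y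

lemma mGraph_edist_le_of_annihilatingExponent_sub_le (hp : IsNilpotent p)
    (hm : (m : R) = p ^ 2) {u v : R} {j : ℕ} (h : annihilatingExponent p (u - v) ≤ 2 * j) :
    (mGraph m R).edist u v ≤ 2 * j := by
  refine mGraph_edist_le_of_pow_nsmul_eq ?_
  rw [← sub_eq_zero, ← smul_sub, nsmul_eq_mul, Nat.cast_pow, hm, ← pow_mul]
  exact (pow_mul_eq_zero_iff_annihilatingExponent_le hp).mpr h

lemma mGraph_edist_zero_le_of_annihilatingExponent_le (hp : IsNilpotent p)
    (hm : (m : R) = p ^ 2) {x : R} {j : ℕ} (h : annihilatingExponent p x ≤ 2 * j) :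
    (mGraph m R).edist x 0 ≤ j := by
  have hx : (m ^ j) • x = 0 := by
    rw [nsmul_eq_mul, Nat.cast_pow, hm, ← pow_mul]
    exact (pow_mul_eq_zero_iff_annihilatingExponent_le hp).mpr h
  simpa [hx] using mGraph_edist_pow_nsmul_le (m := m) x j

end mGraphPotential

namespace ZMod

variable {d : ℕ}

lemma two_pow_eq_zero_iff {j : ℕ} : (2 : ZMod (2 ^ d)) ^ j = 0 ↔ d ≤ j := by
  have : ((2 ^ j : ℕ) : ZMod (2 ^ d)) = 2 ^ j := by push_cast; rfl
  rw [← this, natCast_eq_zero_iff, Nat.pow_dvd_pow_iff_le_right one_lt_two]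

lemma isNilpotent_two : IsNilpotent (2 : ZMod (2 ^ d)) := ⟨d, two_pow_eq_zero_iff.mpr le_rfl⟩

lemma annihilatingExponent_two_le (x : ZMod (2 ^ d)) : annihilatingExponent 2 x ≤ d := by
  rw [← pow_mul_eq_zero_iff_annihilatingExponent_le isNilpotent_two,
    two_pow_eq_zero_iff.mpr le_rfl, zero_mul]

lemma annihilatingExponent_two_one : annihilatingExponent (2 : ZMod (2 ^ d)) 1 = d :=
  eq_of_forall_ge_iff fun j => by
    rw [← pow_mul_eq_zero_iff_annihilatingExponent_le isNilpotent_two, mul_one,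
      two_pow_eq_zero_iff]

lemma annihilatingExponent_two_two : annihilatingExponent (2 : ZMod (2 ^ d)) 2 = d - 1 := by
  simpa [annihilatingExponent_two_one] using
    annihilatingExponent_pow_mul isNilpotent_two (1 : ZMod (2 ^ d)) 1

lemma annihilatingExponent_two_le_of_even {x : ZMod (2 ^ d)} (hx : Even x) :
    annihilatingExponent 2 x ≤ d - 1 := by
  obtain ⟨r, rfl⟩ := hx
  have := annihilatingExponent_pow_mul isNilpotent_two r 1
  rw [pow_one, two_mul] at this
  rw [this]
  exact Nat.sub_le_sub_right (annihilatingExponent_two_le r) 1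

lemma even_or_odd (x : ZMod (2 ^ d)) : Even x ∨ Odd x := by
  obtain ⟨k, rfl⟩ := intCast_surjective x
  exact (Int.even_or_odd k).imp Even.intCast Odd.intCast

end ZMod

namespace ZMod

variable {d : ℕ}

lemma natCast_four_eq_two_sq : ((4 : ℕ) : ZMod (2 ^ d)) = 2 ^ 2 := by norm_num

lemma mGraph_four_edist_le (u v : ZMod (2 ^ d)) : (mGraph 4 (ZMod (2 ^ d))).edist u v ≤ d := by
  have of_even_sub : Even (u - v) → (mGraph 4 (ZMod (2 ^ d))).edist u v ≤ d := fun h =>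
    (mGraph_edist_le_of_annihilatingExponent_sub_le (j := d / 2) isNilpotent_two
      natCast_four_eq_two_sq ((annihilatingExponent_two_le_of_even h).trans (by omega))).trans
      (by exact_mod_cast (by omega : 2 * (d / 2) ≤ d))
  have of_even : ∀ x y : ZMod (2 ^ d), Even x →
      (mGraph 4 (ZMod (2 ^ d))).edist x y ≤ d := fun x y hx =>
    calc (mGraph 4 (ZMod (2 ^ d))).edist x y
        ≤ (mGraph 4 (ZMod (2 ^ d))).edist x 0 + (mGraph 4 (ZMod (2 ^ d))).edist y 0 := by
          rw [SimpleGraph.edist_comm (u := y)]; exact SimpleGraph.edist_triangle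
      _ ≤ (d / 2 : ℕ) + ((d + 1) / 2 : ℕ) := add_le_add
          (mGraph_edist_zero_le_of_annihilatingExponent_le isNilpotent_two natCast_four_eq_two_sq
            ((annihilatingExponent_two_le_of_even hx).trans (by omega)))
          (mGraph_edist_zero_le_of_annihilatingExponent_le isNilpotent_two natCast_four_eq_two_sq
            ((annihilatingExponent_two_le y).trans (by omega)))
      _ = d := by norm_cast; omega
  rcases even_or_odd u with hu | hu <;> rcases even_or_odd v with hv | hv
  · exact of_even_sub (hu.sub hv)
  · exact of_even u v hu
  · exact SimpleGraph.edist_comm.trans_le (of_even v u hv)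
  · exact of_even_sub (hu.sub_odd hv)

lemma le_mGraph_four_edist_one_two : (d : ℕ∞) ≤ (mGraph 4 (ZMod (2 ^ d))).edist 1 2 :=
  SimpleGraph.le_edist_of_le_abs_sub
    (fun _ _ => abs_zigzag_annihilatingExponent_sub_le_of_adj isNilpotent_two
      natCast_four_eq_two_sq)
    (by rw [annihilatingExponent_two_one, annihilatingExponent_two_two,
      abs_zigzag_sub_zigzag_pred])

lemma mGraph_four_ediam : (mGraph 4 (ZMod (2 ^ d))).ediam = d :=
  le_antisymm (SimpleGraph.ediam_le_of_edist_le mGraph_four_edist_le)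
    (le_mGraph_four_edist_one_two.trans SimpleGraph.edist_le_ediam)

end ZMod

theorem stmt_18_general (d : ℕ) :
    ∃ (m n : ℕ), 1 < m ∧ 0 < n ∧
      (mGraph m (ZMod n)).Connected ∧ (mGraph m (ZMod n)).diam = d :=
  ⟨4, 2 ^ d, by norm_num, by positivity,
    SimpleGraph.connected_of_ediam_ne_top (by simp [ZMod.mGraph_four_ediam]),
    by simp [SimpleGraph.diam, ZMod.mGraph_four_ediam]⟩

theorem stmt_18 (d : ℕ) (hd : 1 ≤ d) :
    ∃ (m n : ℕ), 1 < m ∧ 0 < n ∧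
      (mGraph m (ZMod n)).Connected ∧ (mGraph m (ZMod n)).diam = d :=
  stmt_18_general d
end
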